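/- arXiv:1606.02129 — 4 statements merged into one kernel-verified Lean document; each statement's English description precedes it below -/
import Mathlib

section
/- (Laplace's method) Let −∞ ≤ a < 0 < b ≤ +∞ and let h : (a,b) → ℝ have at least two continuous derivatives. Suppose 0 is the global maximum point of h with h(0) = 0, suppose h''(0) < 0, suppose that for every δ > 0 there exists η(δ) > 0 such that h(x) < −η(δ) for all x ∈ (a,b) with x ∉ [−δ, δ], and suppose ∫_a^b e^{h(x)} dx < ∞. Then ∫_a^b e^{t·h(x)} dx is asymptotically equal to √(−2π/(h''(0)·t)) as t → ∞; that is, the ratio of the two quantities tends to 1 as t → ∞. -/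
/-!
Write `c = -h''(0)/2 > 0`. Since `h(0) = h'(0) = 0`, Taylor's theorem gives
`-(c + ε) x² ≤ h x ≤ -(c - ε) x²` on some `[-δ, δ]`, so there `exp (t h)` is squeezed
between Gaussians, whose integrals over `[-δ, δ]` are `√(π / ((c ± ε) t))` up to tails of
order `exp (-(c ± ε) t δ² / 2) / √t`. Off `[-δ, δ]` we have `h < -η`, hence
`exp (t h) ≤ exp (-(t - 1) η) exp h`, which contributes `O(exp (-η t))`. So for every `ε`,
`√(π / (c + ε)) ≤ liminf √t ∫ exp (t h) ≤ limsup √t ∫ exp (t h) ≤ √(π / (c - ε))`,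
and the limit is `√(π / c)`.
-/

open MeasureTheory Real Set Filter Topology Asymptotics

theorem isLittleO_sub_taylor_two {f : ℝ → ℝ} {x₀ f₂ : ℝ}
    (hf : ∀ᶠ x in 𝓝 x₀, DifferentiableAt ℝ f x) (hf₂ : HasDerivAt (deriv f) f₂ x₀) :
    (fun x => f x - f x₀ - deriv f x₀ * (x - x₀) - f₂ / 2 * (x - x₀) ^ 2) =o[𝓝 x₀]
      fun x => (x - x₀) ^ 2 := by
  obtain ⟨ρ, hρ, hball⟩ := Metric.eventually_nhds_iff_ball.1 hf
  have hnhds : 𝓝[Metric.ball x₀ ρ] x₀ = 𝓝 x₀ :=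
    nhdsWithin_eq_nhds.2 (Metric.ball_mem_nhds x₀ hρ)
  have hderiv : ∀ x ∈ Metric.ball x₀ ρ, HasDerivWithinAt
      (fun x => f x - deriv f x₀ * (x - x₀) - f₂ / 2 * (x - x₀) ^ 2)
      (deriv f x - deriv f x₀ - f₂ * (x - x₀)) (Metric.ball x₀ ρ) x := fun x hx =>
    (((hball x hx).hasDerivAt.sub (((hasDerivAt_id x).sub_const x₀).const_mul _)).sub
      ((((hasDerivAt_id x).sub_const x₀).pow 2).const_mul _)).hasDerivWithinAt.congr_deriv
      (by
        simp only [mul_one, Nat.cast_ofNat, id_eq, Nat.add_one_sub_one, pow_one, sub_right_inj]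
        ring)
  have hsmall :
      (fun x => deriv f x - deriv f x₀ - f₂ * (x - x₀)) =o[𝓝 x₀] fun x => (x - x₀) ^ 1 := by
    simpa [mul_comm] using hasDerivAt_iff_isLittleO.1 hf₂
  have := (convex_ball x₀ ρ).isLittleO_pow_succ_real (Metric.mem_ball_self hρ) hderiv
    (hnhds ▸ hsmall)
  rw [hnhds] at this
  exact this.congr_left fun x => by simp only [sub_self]; ring

theorem eventually_neg_mul_sq_le_of_isLittleO {h : ℝ → ℝ} {c k : ℝ}
    (htaylor : (fun x => h x + c * x ^ 2) =o[𝓝 0] fun x => x ^ 2) (hk : c < k) :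
    ∀ᶠ x in 𝓝 0, -(k * x ^ 2) ≤ h x := by
  filter_upwards [htaylor.bound (sub_pos.2 hk)] with x hx
  rw [norm_of_nonneg (sq_nonneg x), Real.norm_eq_abs] at hx
  nlinarith [neg_abs_le (h x + c * x ^ 2)]

theorem eventually_le_neg_mul_sq_of_isLittleO {h : ℝ → ℝ} {c k : ℝ}
    (htaylor : (fun x => h x + c * x ^ 2) =o[𝓝 0] fun x => x ^ 2) (hk : k < c) :
    ∀ᶠ x in 𝓝 0, h x ≤ -(k * x ^ 2) := by
  filter_upwards [htaylor.bound (sub_pos.2 hk)] with x hx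
  rw [norm_of_nonneg (sq_nonneg x), Real.norm_eq_abs] at hx
  nlinarith [le_abs_self (h x + c * x ^ 2)]

theorem exists_pos_forall_mem_Icc {p : ℝ → Prop} (hp : ∀ᶠ x in 𝓝 0, p x) :
    ∃ δ > 0, ∀ x ∈ Icc (-δ) δ, p x := by
  obtain ⟨δ, hδ, hball⟩ := Metric.nhds_basis_closedBall.eventually_iff.1 hp
  exact ⟨δ, hδ, fun x hx => hball (by simpa [Real.closedBall_eq_Icc] using hx)⟩

theorem setIntegral_exp_neg_mul_sq_le (s : Set ℝ) {b : ℝ} (hb : 0 < b) :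
    ∫ x in s, exp (-b * x ^ 2) ≤ √(π / b) :=
  integral_gaussian b ▸
    setIntegral_le_integral (integrable_exp_neg_mul_sq hb) (.of_forall fun _ => (exp_pos _).le)

theorem setIntegral_compl_Icc_exp_neg_mul_sq_le {b δ : ℝ} (hb : 0 < b) (hδ : 0 ≤ δ) :
    ∫ x in (Icc (-δ) δ)ᶜ, exp (-b * x ^ 2) ≤ exp (-(b * δ ^ 2 / 2)) * √(2 * π / b) := by
  have hpt : ∀ x ∈ (Icc (-δ) δ)ᶜ,
      exp (-b * x ^ 2) ≤ exp (-(b * δ ^ 2 / 2)) * exp (-(b / 2) * x ^ 2) := by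
    intro x hx
    have hδx : δ ^ 2 ≤ x ^ 2 := by
      rw [mem_compl_iff, mem_Icc, not_and_or, not_le, not_le] at hx
      rcases hx with hx | hx <;> nlinarith
    rw [← exp_add]
    gcongr
    nlinarith
  calc ∫ x in (Icc (-δ) δ)ᶜ, exp (-b * x ^ 2)
      ≤ ∫ x in (Icc (-δ) δ)ᶜ, exp (-(b * δ ^ 2 / 2)) * exp (-(b / 2) * x ^ 2) :=
        setIntegral_mono_on (integrable_exp_neg_mul_sq hb).integrableOn
          ((integrable_exp_neg_mul_sq (by positivity)).const_mul _).integrableOn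
          measurableSet_Icc.compl hpt
    _ ≤ exp (-(b * δ ^ 2 / 2)) * √(2 * π / b) := by
        rw [integral_const_mul, show 2 * π / b = π / (b / 2) by field_simp]
        gcongr
        exact setIntegral_exp_neg_mul_sq_le _ (by positivity)

theorem sqrt_sub_le_setIntegral_Icc_exp_neg_mul_sq {b δ : ℝ} (hb : 0 < b) (hδ : 0 ≤ δ) :
    √(π / b) - exp (-(b * δ ^ 2 / 2)) * √(2 * π / b) ≤ ∫ x in Icc (-δ) δ, exp (-b * x ^ 2) := by
  have := integral_add_compl (measurableSet_Icc (a := -δ) (b := δ))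
    (integrable_exp_neg_mul_sq hb)
  rw [integral_gaussian] at this
  linarith [setIntegral_compl_Icc_exp_neg_mul_sq_le hb hδ]

theorem integrableOn_exp_mul_of_nonpos {h : ℝ → ℝ} {S : Set ℝ} {t : ℝ}
    (hSm : MeasurableSet S) (hh : ∀ x ∈ S, h x ≤ 0) (hint : IntegrableOn (fun x => exp (h x)) S)
    (ht : 1 ≤ t) :
    IntegrableOn (fun x => exp (t * h x)) S := by
  have hmeas : AEStronglyMeasurable (fun x => exp (t * h x)) (volume.restrict S) := by
    simp_rw [mul_comm t, exp_mul]
    exact (hint.aestronglyMeasurable.aemeasurable.pow_const t).aestronglyMeasurable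
  refine Integrable.mono hint hmeas (ae_restrict_of_forall_mem hSm fun x hx => ?_)
  simp only [norm_of_nonneg (exp_pos _).le]
  gcongr
  nlinarith [hh x hx]

theorem sqrt_mul_sqrt_div_mul {t : ℝ} (ht : 0 < t) (a k : ℝ) :
    √t * √(a / (t * k)) = √(a / k) := by
  rw [← sqrt_mul ht.le]
  congr 1
  field_simp

theorem eventually_lt_sqrt_mul_setIntegral_exp_mul {h : ℝ → ℝ} {S : Set ℝ} {k r : ℝ}
    (hk : 0 < k) (hS : S ∈ 𝓝 0) (hlow : ∀ᶠ x in 𝓝 0, -(k * x ^ 2) ≤ h x)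
    (hint : ∀ᶠ t in atTop, IntegrableOn (fun x => exp (t * h x)) S) (hr : r < √(π / k)) :
    ∀ᶠ t in atTop, r < √t * ∫ x in S, exp (t * h x) := by
  obtain ⟨δ, hδ, hδS⟩ := exists_pos_forall_mem_Icc ((eventually_mem_set.2 hS).and hlow)
  have herr : Tendsto (fun t => √(π / k) - exp (-(t * k * δ ^ 2 / 2)) * √(2 * π / k)) atTop
      (𝓝 (√(π / k))) := by
    have : Tendsto (fun t => t * k * δ ^ 2 / 2) atTop atTop := by
      simp_rw [mul_assoc, mul_div_assoc]
      exact tendsto_id.atTop_mul_const (by positivity)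
    simpa using
      tendsto_const_nhds.sub
        ((tendsto_exp_atBot.comp (tendsto_neg_atTop_atBot.comp this)).mul_const (√(2 * π / k)))
  filter_upwards [herr.eventually (lt_mem_nhds hr), hint, eventually_gt_atTop 0] with t hlt hti ht
  refine hlt.trans_le ?_
  calc √(π / k) - exp (-(t * k * δ ^ 2 / 2)) * √(2 * π / k)
      = √t * (√(π / (t * k)) - exp (-(t * k * δ ^ 2 / 2)) * √(2 * π / (t * k))) := by
        rw [mul_sub, mul_left_comm, sqrt_mul_sqrt_div_mul ht, sqrt_mul_sqrt_div_mul ht]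
    _ ≤ √t * ∫ x in Icc (-δ) δ, exp (-(t * k) * x ^ 2) := by
        gcongr √t * ?_
        exact sqrt_sub_le_setIntegral_Icc_exp_neg_mul_sq (by positivity) hδ.le
    _ ≤ √t * ∫ x in Icc (-δ) δ, exp (t * h x) := by
        gcongr √t * ?_
        refine setIntegral_mono_on (integrable_exp_neg_mul_sq (by positivity)).integrableOn
          (hti.mono_set fun x hx => (hδS x hx).1) measurableSet_Icc fun x hx => exp_le_exp.2 ?_
        nlinarith [mul_le_mul_of_nonneg_left (hδS x hx).2 ht.le]
    _ ≤ √t * ∫ x in S, exp (t * h x) := by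
        gcongr √t * ?_
        exact setIntegral_mono_set hti (.of_forall fun _ => (exp_pos _).le)
          (Eventually.of_forall fun x hx => (hδS x hx).1)

theorem eventually_sqrt_mul_setIntegral_exp_mul_lt {h : ℝ → ℝ} {S : Set ℝ} {k r : ℝ}
    (hk : 0 < k) (hSm : MeasurableSet S) (hup : ∀ᶠ x in 𝓝 0, h x ≤ -(k * x ^ 2))
    (hsep : ∀ δ > (0:ℝ), ∃ η > (0:ℝ), ∀ x ∈ S, x ∉ Icc (-δ) δ → h x < -η)
    (hint : IntegrableOn (fun x => exp (h x)) S) (hr : √(π / k) < r) :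
    ∀ᶠ t in atTop, √t * ∫ x in S, exp (t * h x) < r := by
  obtain ⟨δ, hδ, hδup⟩ := exists_pos_forall_mem_Icc hup
  obtain ⟨η, hη, hηS⟩ := hsep δ hδ
  set C := ∫ x in S, exp (h x)
  have herr : Tendsto (fun t => √(π / k) + C * exp η * (t ^ (1 / 2 : ℝ) * exp (-η * t))) atTop
      (𝓝 (√(π / k))) := by
    simpa using tendsto_const_nhds.add
      ((tendsto_rpow_mul_exp_neg_mul_atTop_nhds_zero _ _ hη).const_mul (C * exp η))
  filter_upwards [herr.eventually (gt_mem_nhds hr), eventually_ge_atTop 1] with t hlt ht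
  refine lt_of_le_of_lt ?_ hlt
  have hpt : ∀ x ∈ S,
      exp (t * h x) ≤ exp (-(t * k) * x ^ 2) + exp (-((t - 1) * η)) * exp (h x) := by
    intro x hx
    by_cases hxδ : x ∈ Icc (-δ) δ
    · have : exp (t * h x) ≤ exp (-(t * k) * x ^ 2) := by
        apply exp_le_exp.2
        nlinarith [mul_le_mul_of_nonneg_left (hδup x hxδ) (by linarith : (0:ℝ) ≤ t)]
      linarith [mul_pos (exp_pos (-((t - 1) * η))) (exp_pos (h x))]
    · have : exp (t * h x) ≤ exp (-((t - 1) * η)) * exp (h x) := by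
        rw [← exp_add]
        gcongr
        nlinarith [mul_le_mul_of_nonneg_left (hηS x hx hxδ).le (by linarith : (0:ℝ) ≤ t - 1)]
      linarith [exp_pos (-(t * k) * x ^ 2)]
  have hgauss : Integrable (fun x => exp (-(t * k) * x ^ 2)) :=
    integrable_exp_neg_mul_sq (by positivity)
  calc √t * ∫ x in S, exp (t * h x)
      ≤ √t * ∫ x in S, (exp (-(t * k) * x ^ 2) + exp (-((t - 1) * η)) * exp (h x)) := by
        gcongr √t * ?_
        exact integral_mono_of_nonneg (.of_forall fun _ => (exp_pos _).le)
          (hgauss.integrableOn.add (hint.const_mul _)) (ae_restrict_of_forall_mem hSm hpt)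
    _ ≤ √t * (√(π / (t * k)) + exp (-((t - 1) * η)) * C) := by
        rw [integral_add hgauss.integrableOn (hint.const_mul _), integral_const_mul]
        gcongr √t * (?_ + _)
        exact setIntegral_exp_neg_mul_sq_le _ (by positivity)
    _ = √(π / k) + C * exp η * (t ^ (1 / 2 : ℝ) * exp (-η * t)) := by
        rw [mul_add, sqrt_mul_sqrt_div_mul (by positivity), sqrt_eq_rpow t,
          show -((t - 1) * η) = η + -η * t by ring, exp_add]
        ring

theorem tendsto_sqrt_mul_setIntegral_exp_mul {h : ℝ → ℝ} {S : Set ℝ} {c : ℝ} (hc : 0 < c)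
    (hSm : MeasurableSet S) (hS : S ∈ 𝓝 0) (hnonpos : ∀ x ∈ S, h x ≤ 0)
    (htaylor : (fun x => h x + c * x ^ 2) =o[𝓝 0] fun x => x ^ 2)
    (hsep : ∀ δ > (0:ℝ), ∃ η > (0:ℝ), ∀ x ∈ S, x ∉ Icc (-δ) δ → h x < -η)
    (hint : IntegrableOn (fun x => exp (h x)) S) :
    Tendsto (fun t => √t * ∫ x in S, exp (t * h x)) atTop (𝓝 √(π / c)) := by
  have hcont : ContinuousAt (fun k => √(π / k)) c :=
    (continuousAt_const.div continuousAt_id hc.ne').sqrt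
  refine tendsto_order.2 ⟨fun r hr => ?_, fun r hr => ?_⟩
  · obtain ⟨k, hrk, hck⟩ := ((hcont.eventually (lt_mem_nhds hr)).filter_mono
      nhdsWithin_le_nhds |>.and (self_mem_nhdsWithin (s := Ioi c))).exists
    exact eventually_lt_sqrt_mul_setIntegral_exp_mul (hc.trans hck) hS
      (eventually_neg_mul_sq_le_of_isLittleO htaylor hck)
      ((eventually_ge_atTop 1).mono fun t => integrableOn_exp_mul_of_nonpos hSm hnonpos hint) hrk
  · obtain ⟨k, ⟨hrk, hk⟩, hkc⟩ := (((hcont.eventually (gt_mem_nhds hr)).and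
      (lt_mem_nhds hc)).filter_mono nhdsWithin_le_nhds |>.and
      (self_mem_nhdsWithin (s := Iio c))).exists
    exact eventually_sqrt_mul_setIntegral_exp_mul_lt hk hSm
      (eventually_le_neg_mul_sq_of_isLittleO htaylor hkc) hsep hint hrk

/-- **Laplace's method.** `S` is the open interval `(a,b)` with `a < 0 < b`,
where `a, b` may be infinite (elements of `EReal`). -/
theorem laplace_method (a b : EReal) (ha : a < 0) (hb : 0 < b)
    (h : ℝ → ℝ)
    (S : Set ℝ) (hS : S = {x : ℝ | a < (x : EReal) ∧ (x : EReal) < b})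
    (hsmooth : ContDiffOn ℝ 2 h S)
    (hmax : ∀ x ∈ S, h x ≤ h 0) (h0 : h 0 = 0)
    (hsecond : deriv (deriv h) 0 < 0)
    (hsep : ∀ δ > (0:ℝ), ∃ η > (0:ℝ), ∀ x ∈ S, x ∉ Icc (-δ) δ → h x < -η)
    (hint : IntegrableOn (fun x => Real.exp (h x)) S) :
    Tendsto (fun t : ℝ =>
        (∫ x in S, Real.exp (t * h x)) /
          Real.sqrt (-(2 * Real.pi) / (deriv (deriv h) 0 * t)))
      atTop (nhds 1) := by
  have hSo : IsOpen S := hS ▸ isOpen_Ioo.preimage continuous_coe_real_ereal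
  have hSn : S ∈ 𝓝 0 := hSo.mem_nhds (by simp [hS, ha, hb])
  have hd1 : deriv h 0 = 0 := IsLocalMax.deriv_eq_zero (mem_of_superset hSn hmax)
  have hd2 : HasDerivAt (deriv h) (deriv (deriv h) 0) 0 :=
    (((hsmooth.deriv_of_isOpen hSo le_rfl).differentiableOn one_ne_zero 0
      (mem_of_mem_nhds hSn)).differentiableAt hSn).hasDerivAt
  have hdiff : ∀ᶠ x in 𝓝 0, DifferentiableAt ℝ h x := mem_of_superset hSn fun x hx =>
    (hsmooth.differentiableOn two_ne_zero x hx).differentiableAt (hSo.mem_nhds hx)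
  set c := -deriv (deriv h) 0 / 2
  have htaylor : (fun x => h x + c * x ^ 2) =o[𝓝 0] fun x => x ^ 2 :=
    (isLittleO_sub_taylor_two hdiff hd2).congr
      (fun x => by simp only [h0, sub_zero, hd1, zero_mul, c]; ring) (by simp)
  have hc : 0 < c := half_pos (neg_pos.2 hsecond)
  have hlim := tendsto_sqrt_mul_setIntegral_exp_mul hc hSo.measurableSet hSn
    (fun x hx => h0 ▸ hmax x hx) htaylor hsep hint
  have hpos : 0 < √(π / c) := sqrt_pos.2 (div_pos pi_pos hc)
  rw [← div_self hpos.ne']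
  refine (hlim.div_const _).congr' ?_
  filter_upwards [eventually_gt_atTop 0] with t ht
  rw [show -(2 * π) / (deriv (deriv h) 0 * t) = π / c / t by simp only [c]; field_simp,
    sqrt_div' _ ht.le]
  field_simp
end

section
/- Fix p > 0 and let J_{a,p} = ∫_0^∞ t^a e^{−t^p/p} dt. Then J_{a,p} is asymptotically equal to √(2π/p) · a^{1/p − 1/2} · a^{a/p} · e^{−a/p} as a → ∞; that is, J_{a,p} / (√(2π/p) · a^{1/p − 1/2} · a^{a/p} · e^{−a/p}) → 1 as a → ∞. -/
/-!
Substituting `u = t ^ p / p` turns `J_{a,p}` into `p ^ ((a + 1) / p - 1) * Γ(a / p + 1 / p)`.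
Comparing slopes of the convex function `log ∘ Γ` over `[x - 1, x]`, `[x, x + c]` and
`[x + c, x + c + 1]` gives Wendel's limit `Γ(x + c) ~ x ^ c Γ(x)`; used with `c = x - ⌊x⌋` it
extends Stirling's formula from the integers to `Γ(x) ~ √(2π) x ^ (x - 1/2) e ^ (-x)` for real
`x → ∞`. With `x = a / p` and `c = 1 / p` the two asymptotics multiply to exactly the claimed one.
-/

open MeasureTheory Real Set Filter Topology

/-- `Jint p a = ∫_0^∞ t^a e^{-t^p/p} dt`. -/
noncomputable def Jint (p a : ℝ) : ℝ := ∫ t in Ioi (0:ℝ), t ^ a * Real.exp (-(t ^ p) / p)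

lemma tendsto_nhds_one_of_tendsto_log {α : Type*} {l : Filter α} {f : α → ℝ}
    (hf : ∀ᶠ x in l, 0 < f x) (h : Tendsto (fun x => log (f x)) l (𝓝 0)) :
    Tendsto f l (𝓝 1) := by
  have h' := (continuous_exp.tendsto 0).comp h
  rw [exp_zero] at h'
  refine h'.congr' ?_
  filter_upwards [hf] with x hx
  exact exp_log hx

namespace Real

lemma log_Gamma_add_one {x : ℝ} (hx : 0 < x) :
    log (Gamma (x + 1)) = log (Gamma x) + log x := by
  rw [Gamma_add_one hx.ne', log_mul hx.ne' (Gamma_pos_of_pos hx).ne', add_comm]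

lemma mul_log_sub_one_le_log_Gamma_add_sub {x c : ℝ} (hx : 1 < x) (hc : 0 < c) :
    c * log (x - 1) ≤ log (Gamma (x + c)) - log (Gamma x) := by
  have h := convexOn_log_Gamma.slope_mono_adjacent (x := x - 1) (y := x) (z := x + c)
    (by simp only [mem_Ioi]; linarith) (by simp only [mem_Ioi]; linarith) (by linarith)
    (by linarith)
  have hstep := log_Gamma_add_one (x := x - 1) (by linarith)
  simp only [Function.comp_apply, sub_add_cancel, sub_sub_cancel, div_one,
    add_sub_cancel_left] at h hstep
  rw [le_div_iff₀ hc] at h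
  linear_combination h - c * hstep

lemma log_Gamma_add_sub_le_mul_log {x c : ℝ} (hx : 0 < x) (hc : 0 < c) :
    log (Gamma (x + c)) - log (Gamma x) ≤ c * log (x + c) := by
  have h := convexOn_log_Gamma.slope_mono_adjacent (x := x) (y := x + c) (z := x + c + 1)
    (by simpa using hx) (by simp only [mem_Ioi]; linarith) (by linarith) (by linarith)
  have hstep := log_Gamma_add_one (x := x + c) (by linarith)
  simp only [Function.comp_apply, add_sub_cancel_left, div_one] at h
  rw [div_le_iff₀ hc] at h
  linear_combination h + c * hstep

lemma abs_log_Gamma_add_sub_le {x c : ℝ} (hx : 1 < x) (hc : 0 ≤ c) :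
    |log (Gamma (x + c)) - log (Gamma x) - c * log x| ≤ (c + c ^ 2) / (x - 1) := by
  rcases hc.eq_or_lt with rfl | hc
  · simp
  have hx1 : 0 < x - 1 := by linarith
  have hlow : -(1 / (x - 1)) ≤ log (x - 1) - log x := by
    have h := one_sub_inv_le_log_of_pos (x := (x - 1) / x) (by positivity)
    rw [log_div hx1.ne' (by positivity), inv_div] at h
    convert h using 1
    field_simp
    ring
  have hup : log (x + c) - log x ≤ c / x := by
    have h := log_le_sub_one_of_pos (x := (x + c) / x) (by positivity)
    rw [log_div (by positivity) (by positivity)] at h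
    convert h using 1
    field_simp
    ring
  have hcx : c / x ≤ c / (x - 1) := div_le_div_of_nonneg_left hc.le hx1 (by linarith)
  have h1 := mul_log_sub_one_le_log_Gamma_add_sub hx hc
  have h2 := log_Gamma_add_sub_le_mul_log (x := x) (by linarith) hc
  rw [abs_le, add_div, sq, mul_div_assoc]
  have hlow' := mul_le_mul_of_nonneg_left hlow hc.le
  rw [mul_neg, mul_one_div] at hlow'
  have hup' := mul_le_mul_of_nonneg_left (hup.trans hcx) hc.le
  have hpos : 0 ≤ c * (c / (x - 1)) := by positivity
  constructor <;> nlinarith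

theorem tendsto_Gamma_add_div_Gamma_mul_rpow {c : ℝ} (hc : 0 ≤ c) :
    Tendsto (fun x => Gamma (x + c) / (Gamma x * x ^ c)) atTop (𝓝 1) := by
  refine tendsto_nhds_one_of_tendsto_log ?_ ?_
  · filter_upwards [eventually_gt_atTop 0] with x hx
    have := Gamma_pos_of_pos (add_pos_of_pos_of_nonneg hx hc)
    have := Gamma_pos_of_pos hx
    positivity
  have hbound : Tendsto (fun x : ℝ => (c + c ^ 2) / (x - 1)) atTop (𝓝 0) :=
    tendsto_const_nhds.div_atTop (tendsto_atTop_add_const_right atTop (-1) tendsto_id)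
  refine squeeze_zero_norm' ?_ hbound
  filter_upwards [eventually_gt_atTop 1] with x hx
  have hx0 : 0 < x := by linarith
  rw [Real.norm_eq_abs, log_div (Gamma_pos_of_pos (by linarith)).ne' (by positivity),
    log_mul (Gamma_pos_of_pos hx0).ne' (by positivity), log_rpow hx0, ← sub_sub]
  exact abs_log_Gamma_add_sub_le hx hc

end Real

noncomputable def stirlingApprox (x : ℝ) : ℝ := √(2 * π) * x ^ (x - 1 / 2) * exp (-x)

lemma stirlingApprox_pos {x : ℝ} (hx : 0 < x) : 0 < stirlingApprox x := by
  unfold stirlingApprox; positivity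

lemma log_stirlingApprox {x : ℝ} (hx : 0 < x) :
    log (stirlingApprox x) = log √(2 * π) + (x - 1 / 2) * log x - x := by
  rw [stirlingApprox, log_mul (by positivity) (exp_pos _).ne',
    log_mul (by positivity) (rpow_pos_of_pos hx _).ne', log_rpow hx, log_exp]
  ring

lemma abs_log_stirlingApprox_sub_le {n x : ℝ} (hn : 1 ≤ n) (hnx : n ≤ x) (hxn : x ≤ n + 1) :
    |log (stirlingApprox x) - log (stirlingApprox n) - (x - n) * log n| ≤ 1 / n := by
  have hn0 : 0 < n := by linarith
  have hx0 : 0 < x := by linarith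
  have hup : (log x - log n) * n ≤ x - n := by
    have h := log_le_sub_one_of_pos (div_pos hx0 hn0)
    rw [log_div hx0.ne' hn0.ne', div_sub_one hn0.ne', le_div_iff₀ hn0] at h
    exact h
  have hlow : x - n ≤ (log x - log n) * x := by
    have h := one_sub_inv_le_log_of_pos (div_pos hx0 hn0)
    rw [log_div hx0.ne' hn0.ne', inv_div, one_sub_div hx0.ne', div_le_iff₀ hx0] at h
    exact h
  have hinv : n * (1 / n) = 1 := by field_simp
  rw [log_stirlingApprox hx0, log_stirlingApprox hn0, abs_le]
  constructor <;> nlinarith [one_div_pos.2 hn0]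

lemma tendsto_Gamma_natCast_div_stirlingApprox :
    Tendsto (fun n : ℕ => Gamma n / stirlingApprox n) atTop (𝓝 1) := by
  have h := Stirling.tendsto_stirlingSeq_sqrt_pi.div_const √π
  rw [div_self (by positivity)] at h
  refine h.congr' ?_
  filter_upwards [eventually_ge_atTop 1] with n hn
  have hn0 : (0 : ℝ) < n := by exact_mod_cast hn
  have hfact : (n.factorial : ℝ) = n * Gamma n := by
    rw [← Gamma_nat_eq_factorial, Gamma_add_one hn0.ne']
  rw [Stirling.stirlingSeq, stirlingApprox, hfact, rpow_sub hn0, rpow_natCast,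
    ← sqrt_eq_rpow, div_pow, ← exp_nat_mul, mul_one, exp_neg, sqrt_mul (by norm_num : (0:ℝ) ≤ 2),
    sqrt_mul (by norm_num : (0:ℝ) ≤ 2)]
  field_simp
  exact (sq_sqrt hn0.le).symm

lemma abs_log_Gamma_sub_log_stirlingApprox_sub_le {n x : ℝ} (hn : 2 ≤ n) (hnx : n ≤ x)
    (hxn : x ≤ n + 1) :
    |log (Gamma x) - log (stirlingApprox x) - (log (Gamma n) - log (stirlingApprox n))|
      ≤ 3 / (n - 1) := by
  have hn1 : 0 < n - 1 := by linarith
  have hGamma := abs_log_Gamma_add_sub_le (x := n) (c := x - n) (by linarith) (by linarith)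
  rw [add_sub_cancel] at hGamma
  have hstir := abs_log_stirlingApprox_sub_le (by linarith) hnx hxn
  have hθ : (x - n) + (x - n) ^ 2 ≤ 2 := by nlinarith
  calc |log (Gamma x) - log (stirlingApprox x) - (log (Gamma n) - log (stirlingApprox n))|
      = |(log (Gamma x) - log (Gamma n) - (x - n) * log n)
          - (log (stirlingApprox x) - log (stirlingApprox n) - (x - n) * log n)| := by
        ring_nf
    _ ≤ |log (Gamma x) - log (Gamma n) - (x - n) * log n|
          + |log (stirlingApprox x) - log (stirlingApprox n) - (x - n) * log n| := abs_sub _ _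
    _ ≤ 2 / (n - 1) + 1 / (n - 1) := by
        gcongr
        · exact hGamma.trans (by gcongr)
        · exact hstir.trans (by gcongr; linarith)
    _ = 3 / (n - 1) := by ring

lemma tendsto_log_Gamma_natCast_sub_log_stirlingApprox :
    Tendsto (fun n : ℕ => log (Gamma n) - log (stirlingApprox n)) atTop (𝓝 0) := by
  have h := ((continuousAt_log one_ne_zero).tendsto).comp
    tendsto_Gamma_natCast_div_stirlingApprox
  rw [log_one] at h
  refine h.congr' ?_
  filter_upwards [eventually_ge_atTop 1] with n hn
  have hn0 : (0 : ℝ) < n := by exact_mod_cast hn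
  exact log_div (Gamma_pos_of_pos hn0).ne' (stirlingApprox_pos hn0).ne'

theorem tendsto_Gamma_div_stirlingApprox :
    Tendsto (fun x => Gamma x / stirlingApprox x) atTop (𝓝 1) := by
  refine tendsto_nhds_one_of_tendsto_log ?_ ?_
  · filter_upwards [eventually_gt_atTop 0] with x hx
    exact div_pos (Gamma_pos_of_pos hx) (stirlingApprox_pos hx)
  have hfloor := tendsto_log_Gamma_natCast_sub_log_stirlingApprox.comp
    (tendsto_nat_floor_atTop (α := ℝ))
  have hbound : Tendsto (fun x : ℝ => 3 / (x - 2)) atTop (𝓝 0) :=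
    tendsto_const_nhds.div_atTop (tendsto_atTop_add_const_right atTop (-2) tendsto_id)
  have hdiff := squeeze_zero_norm' (f := fun x : ℝ => log (Gamma x) - log (stirlingApprox x)
      - (log (Gamma ⌊x⌋₊) - log (stirlingApprox ⌊x⌋₊))) ?_ hbound
  · rw [← add_zero 0]
    refine (hfloor.add hdiff).congr' ?_
    filter_upwards [eventually_gt_atTop 0] with x hx
    rw [Function.comp_apply, add_sub_cancel,
      log_div (Gamma_pos_of_pos hx).ne' (stirlingApprox_pos hx).ne']
  filter_upwards [eventually_ge_atTop 3] with x hx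
  have hn : (2 : ℝ) ≤ ⌊x⌋₊ := by exact_mod_cast Nat.le_floor (by norm_num; linarith)
  have hnx : (⌊x⌋₊ : ℝ) ≤ x := Nat.floor_le (by linarith)
  have hxn : x < ⌊x⌋₊ + 1 := Nat.lt_floor_add_one x
  refine (abs_log_Gamma_sub_log_stirlingApprox_sub_le hn hnx hxn.le).trans ?_
  exact div_le_div_of_nonneg_left (by norm_num) (by linarith) (by linarith)

lemma Jint_eq_rpow_mul_Gamma {p a : ℝ} (hp : 0 < p) (ha : -1 < a) :
    Jint p a = p ^ ((a + 1) / p - 1) * Gamma ((a + 1) / p) := by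
  have hexp : Jint p a = ∫ t in Ioi (0 : ℝ), t ^ a * exp (-(1 / p) * t ^ p) := by
    unfold Jint
    congr 1 with t
    rw [neg_div, neg_mul, one_div, inv_mul_eq_div]
  rw [hexp, integral_rpow_mul_exp_neg_mul_rpow hp ha (by positivity), one_div, inv_rpow hp.le,
    ← rpow_neg hp.le, neg_div, neg_neg, rpow_sub hp, rpow_one, div_eq_mul_inv]
  ring

lemma rpow_mul_stirlingApprox_mul_rpow {p a : ℝ} (hp : 0 < p) (ha : 0 < a) :
    p ^ ((a + 1) / p - 1) * (stirlingApprox (a / p) * (a / p) ^ (1 / p)) =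
      √(2 * π / p) * a ^ (1 / p - 1 / 2) * a ^ (a / p) * exp (-a / p) := by
  have hap : 0 < a / p := by positivity
  apply log_injOn_pos (mem_Ioi.2 (by have := stirlingApprox_pos hap; positivity))
    (mem_Ioi.2 (by positivity))
  rw [log_mul (by positivity) (by have := stirlingApprox_pos hap; positivity),
    log_mul (stirlingApprox_pos hap).ne' (by positivity), log_stirlingApprox hap,
    log_mul (by positivity) (by positivity), log_mul (by positivity) (by positivity),
    log_mul (by positivity) (by positivity), log_rpow hp, log_rpow hap, log_rpow ha,
    log_rpow ha, log_exp, log_sqrt (by positivity), log_sqrt (by positivity),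
    log_div (x := 2 * π) (by positivity) hp.ne', log_div ha.ne' hp.ne']
  field_simp
  ring

/-- Asymptotics of `J_{a,p}` as `a → ∞`. -/
theorem Jint_asymptotics (p : ℝ) (hp : 0 < p) :
    Tendsto (fun a : ℝ =>
        Jint p a /
          (Real.sqrt (2 * Real.pi / p) * a ^ (1/p - 1/2) * a ^ (a/p) * Real.exp (-a/p)))
      atTop (nhds 1) := by
  have h := ((tendsto_Gamma_add_div_Gamma_mul_rpow (one_div_pos.2 hp).le).mul
    tendsto_Gamma_div_stirlingApprox).comp (tendsto_id.atTop_div_const hp)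
  rw [one_mul] at h
  refine h.congr' ?_
  filter_upwards [eventually_gt_atTop 0] with a ha
  have hap : 0 < a / p := by positivity
  have hGamma := Gamma_pos_of_pos hap
  have hstir := stirlingApprox_pos hap
  rw [Jint_eq_rpow_mul_Gamma hp (by linarith), ← rpow_mul_stirlingApprox_mul_rpow hp ha, add_div]
  simp only [Function.comp_apply, id]
  field_simp
end

section
/- For every p > 0 and every δ > 0 there exist positive constants C'(p,δ) and C''(p,δ) such that for all n ≥ 2, (1/J_{n−1,p}) · ∫_{(1+δ)(n−1)^{1/p}}^∞ t^{n+p−2} e^{−t^p/p} dt ≤ C'(p,δ) e^{−C''(p,δ) n}. -/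
/-!
Write `a = n - 1` and `s = a ^ (1/p)`, the maximum point of `t ^ a * exp (-t ^ p / p)`.
Since `log u ≤ u - 1`, for `x > 0` the tail integrand `t ^ (a + p - 1) * exp (-t ^ p / p)` is at
most a constant multiple of `t ^ (p - 1) * exp (-(1 - a / x ^ p) t ^ p / p)`, which has an
explicit primitive; at
`x = c s` with `c = 1 + δ` this bounds the tail by `(c s) ^ a * exp (-c ^ p a / p)` up to a
constant. On the other hand `J_{a,p}` is at least the integral over the window
`[s, r s]`, hence at least `(r - 1) s ^ a exp (-r ^ p a / p)`. The ratio is therefore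
`exp (a (log c - (c ^ p - r ^ p) / p))` up to a constant, and because `c ^ p > 1 + p log c`
some `r > 1` makes the bracket negative.
-/

open MeasureTheory Real Set

open Filter Topology

lemma rpow_le_exp_mul_sub_one {u s : ℝ} (hu : 0 < u) (hs : 0 ≤ s) :
    u ^ s ≤ exp (s * (u - 1)) := by
  rw [rpow_def_of_pos hu, mul_comm]
  exact exp_le_exp.mpr (mul_le_mul_of_nonneg_left (log_le_sub_one_of_pos hu) hs)

lemma rpow_mul_exp_neg_rpow_div_le {p a x t : ℝ} (hp : 0 < p) (ha : 0 ≤ a) (hx : 0 < x)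
    (ht : 0 < t) :
    t ^ a * exp (-(t ^ p) / p)
      ≤ x ^ a * exp (-(a / p)) * exp (-((1 - a / x ^ p) / p) * t ^ p) := by
  have hratio : t ^ a = x ^ a * ((t / x) ^ p) ^ (a / p) := by
    rw [← rpow_mul (div_pos ht hx).le, mul_div_cancel₀ a hp.ne', div_rpow ht.le hx.le,
      mul_div_cancel₀ _ (rpow_pos_of_pos hx a).ne']
  calc t ^ a * exp (-(t ^ p) / p)
      ≤ x ^ a * exp (a / p * ((t / x) ^ p - 1)) * exp (-(t ^ p) / p) := by
        rw [hratio]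
        gcongr
        exact rpow_le_exp_mul_sub_one (rpow_pos_of_pos (div_pos ht hx) p) (by positivity)
    _ = x ^ a * exp (-(a / p)) * exp (-((1 - a / x ^ p) / p) * t ^ p) := by
        rw [mul_assoc, ← exp_add, mul_assoc, ← exp_add, div_rpow ht.le hx.le]
        congr 2
        field_simp
        ring

lemma integral_Ioi_rpow_mul_exp_neg_mul_rpow {p b x : ℝ} (hp : 0 < p) (hb : 0 < b) (hx : 0 < x) :
    ∫ t in Ioi x, t ^ (p - 1) * exp (-b * t ^ p) = exp (-b * x ^ p) / (b * p) := by
  have hderiv : ∀ t ∈ Ici x, HasDerivAt (fun t : ℝ => -(b * p)⁻¹ * exp (-b * t ^ p))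
      (t ^ (p - 1) * exp (-b * t ^ p)) t := fun t ht =>
    (((hasDerivAt_rpow_const (Or.inl (hx.trans_le ht).ne')).const_mul (-b)).exp.const_mul
      (-(b * p)⁻¹)).congr_deriv (by field_simp)
  have hlim : Tendsto (fun t : ℝ => -(b * p)⁻¹ * exp (-b * t ^ p)) atTop (𝓝 0) := by
    simpa using (tendsto_exp_atBot.comp ((tendsto_rpow_atTop hp).const_mul_atTop_of_neg
      (neg_neg_of_pos hb))).const_mul (-(b * p)⁻¹)
  have hint : IntegrableOn (fun t : ℝ => t ^ (p - 1) * exp (-b * t ^ p)) (Ioi x) :=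
    (integrableOn_rpow_mul_exp_neg_mul_rpow (by linarith) hp hb).mono_set
      (Ioi_subset_Ioi hx.le)
  rw [integral_Ioi_of_hasDerivAt_of_tendsto' hderiv hint hlim]
  ring

lemma integral_Ioi_rpow_add_sub_one_mul_exp_neg_rpow_div_le {p a x : ℝ} (hp : 0 < p)
    (ha : 0 ≤ a) (hx : 0 < x) (hax : a < x ^ p) :
    ∫ t in Ioi x, t ^ (a + p - 1) * exp (-(t ^ p) / p)
      ≤ x ^ a * exp (-(x ^ p) / p) / (1 - a / x ^ p) := by
  have hxp : 0 < x ^ p := rpow_pos_of_pos hx p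
  have hD : 0 < 1 - a / x ^ p := by rw [sub_pos, div_lt_one hxp]; exact hax
  set b := (1 - a / x ^ p) / p
  have hb : 0 < b := div_pos hD hp
  have hbound : ∀ t ∈ Ioi x, t ^ (a + p - 1) * exp (-(t ^ p) / p)
      ≤ x ^ a * exp (-(a / p)) * (t ^ (p - 1) * exp (-b * t ^ p)) := fun t ht => by
    have ht0 : 0 < t := hx.trans ht
    rw [show a + p - 1 = a + (p - 1) by ring, rpow_add ht0]
    calc t ^ a * t ^ (p - 1) * exp (-(t ^ p) / p)
        = t ^ (p - 1) * (t ^ a * exp (-(t ^ p) / p)) := by ring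
      _ ≤ t ^ (p - 1) * (x ^ a * exp (-(a / p)) * exp (-b * t ^ p)) := by
        exact mul_le_mul_of_nonneg_left (rpow_mul_exp_neg_rpow_div_le hp ha hx ht0)
          (rpow_pos_of_pos ht0 _).le
      _ = _ := by ring
  have hint : IntegrableOn (fun t : ℝ => t ^ (p - 1) * exp (-b * t ^ p)) (Ioi x) :=
    (integrableOn_rpow_mul_exp_neg_mul_rpow (by linarith) hp hb).mono_set
      (Ioi_subset_Ioi hx.le)
  calc ∫ t in Ioi x, t ^ (a + p - 1) * exp (-(t ^ p) / p)
      ≤ ∫ t in Ioi x, x ^ a * exp (-(a / p)) * (t ^ (p - 1) * exp (-b * t ^ p)) := by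
        refine setIntegral_mono_of_nonneg (fun t ht => ?_) hbound (hint.const_mul _)
        have := hx.trans ht
        positivity
    _ = x ^ a * exp (-(x ^ p) / p) / (1 - a / x ^ p) := by
        rw [integral_const_mul, integral_Ioi_rpow_mul_exp_neg_mul_rpow hp hb hx]
        have hbp : b * p = 1 - a / x ^ p := div_mul_cancel₀ _ hp.ne'
        have hexp : -(a / p) + -b * x ^ p = -(x ^ p) / p := by
          simp only [b]
          field_simp
          ring
        rw [hbp, ← hexp, exp_add]
        ring

lemma integrableOn_rpow_mul_exp_neg_rpow_div {p a : ℝ} (hp : 0 < p) (ha : -1 < a) :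
    IntegrableOn (fun t : ℝ => t ^ a * exp (-(t ^ p) / p)) (Ioi 0) :=
  (integrableOn_rpow_mul_exp_neg_mul_rpow ha hp (inv_pos.2 hp)).congr_fun
    (fun t _ => by ring_nf) measurableSet_Ioi

lemma sub_mul_rpow_mul_exp_le_Jint {p a y₁ y₂ : ℝ} (hp : 0 < p) (ha : 0 ≤ a)
    (hy₁ : 0 < y₁) (hy : y₁ ≤ y₂) :
    (y₂ - y₁) * (y₁ ^ a * exp (-(y₂ ^ p) / p)) ≤ Jint p a := by
  have hint := integrableOn_rpow_mul_exp_neg_rpow_div hp (by linarith : -1 < a)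
  have hsub : Ioc y₁ y₂ ⊆ Ioi 0 := fun t ht => hy₁.trans ht.1
  calc (y₂ - y₁) * (y₁ ^ a * exp (-(y₂ ^ p) / p))
      = volume.real (Ioc y₁ y₂) • (y₁ ^ a * exp (-(y₂ ^ p) / p)) := by
        rw [Real.volume_real_Ioc_of_le hy, smul_eq_mul]
    _ ≤ ∫ t in Ioc y₁ y₂, t ^ a * exp (-(t ^ p) / p) := by
        refine setIntegral_ge_of_const_le measurableSet_Ioc measure_Ioc_lt_top.ne
          (fun t ht => ?_) (hint.mono_set hsub)
        have ht₀ : 0 < t := hy₁.trans ht.1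
        gcongr
        exacts [ht.1.le, ht.2]
    _ ≤ Jint p a := by
        refine setIntegral_mono_set hint ?_ hsub.eventuallyLE
        filter_upwards [ae_restrict_mem measurableSet_Ioi] with t (ht : 0 < t)
        positivity

lemma one_div_Jint_mul_integral_Ioi_le {p a c r : ℝ} (hp : 0 < p) (ha : 1 ≤ a) (hc : 1 < c)
    (hr : 1 < r) :
    1 / Jint p a * ∫ t in Ioi (c * a ^ (1 / p)), t ^ (a + p - 1) * exp (-(t ^ p) / p)
      ≤ exp (a * (log c - (c ^ p - r ^ p) / p)) / ((r - 1) * (1 - (c ^ p)⁻¹)) := by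
  set s := a ^ (1 / p)
  have hs₁ : 1 ≤ s := one_le_rpow ha (by positivity)
  have hs₀ : 0 < s := by linarith
  have hc₀ : 0 < c := by linarith
  have hcp : 1 < c ^ p := one_lt_rpow hc hp
  have hsp : s ^ p = a := by rw [← rpow_mul (by linarith), one_div_mul_cancel hp.ne', rpow_one]
  have hxp : (c * s) ^ p = c ^ p * a := by rw [mul_rpow hc₀.le hs₀.le, hsp]
  have hyp : (r * s) ^ p = r ^ p * a := by rw [mul_rpow (by linarith) hs₀.le, hsp]
  have htail := integral_Ioi_rpow_add_sub_one_mul_exp_neg_rpow_div_le (a := a) hp (by linarith)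
    (mul_pos hc₀ hs₀) (by rw [hxp]; nlinarith)
  rw [hxp, show a / (c ^ p * a) = (c ^ p)⁻¹ by field_simp] at htail
  have hwindow := sub_mul_rpow_mul_exp_le_Jint (a := a) hp (by linarith) hs₀
    (le_mul_of_one_le_left hs₀.le hr.le)
  rw [hyp, show r * s - s = (r - 1) * s by ring] at hwindow
  set m := (r - 1) * (s ^ a * exp (-(r ^ p * a) / p))
  have hm : 0 < m := by
    have := sub_pos.2 hr
    positivity
  have hmJ : m ≤ Jint p a :=
    ((le_mul_of_one_le_right hm.le hs₁).trans_eq (by ring)).trans hwindow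
  have hsplit : (c * s) ^ a * exp (-(c ^ p * a) / p)
      = exp (a * (log c - (c ^ p - r ^ p) / p)) * (s ^ a * exp (-(r ^ p * a) / p)) := by
    have hexp : log c * a + -(c ^ p * a) / p
        = a * (log c - (c ^ p - r ^ p) / p) + -(r ^ p * a) / p := by
      ring
    rw [mul_rpow hc₀.le hs₀.le, rpow_def_of_pos hc₀, mul_comm (exp _), mul_assoc, ← exp_add,
      hexp, exp_add]
    ring
  have hT : 0 ≤ ∫ t in Ioi (c * s), t ^ (a + p - 1) * exp (-(t ^ p) / p) := by
    refine setIntegral_nonneg measurableSet_Ioi (fun t ht => ?_)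
    have : 0 < t := (mul_pos hc₀ hs₀).trans ht
    positivity
  calc 1 / Jint p a * ∫ t in Ioi (c * s), t ^ (a + p - 1) * exp (-(t ^ p) / p)
      ≤ 1 / m * ((c * s) ^ a * exp (-(c ^ p * a) / p) / (1 - (c ^ p)⁻¹)) := by
        gcongr
    _ = exp (a * (log c - (c ^ p - r ^ p) / p)) / ((r - 1) * (1 - (c ^ p)⁻¹)) := by
        rw [hsplit]
        simp only [m]
        field_simp

lemma exists_one_lt_rpow_lt_rpow_sub_mul_log {p c : ℝ} (hp : 0 < p) (hc : 1 < c) :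
    ∃ r > 1, r ^ p < c ^ p - p * log c := by
  have hgap : 1 < c ^ p - p * log c := by
    have := add_one_lt_exp (mul_pos hp (log_pos hc)).ne'
    rw [mul_comm p, ← rpow_def_of_pos (by linarith)] at this
    linarith
  obtain ⟨m, hm₁, hm⟩ := exists_between hgap
  refine ⟨m ^ (1 / p), one_lt_rpow hm₁ (by positivity), ?_⟩
  rwa [← rpow_mul (by linarith), one_div_mul_cancel hp.ne', rpow_one]

theorem tail_integral_exponentially_small (p : ℝ) (hp : 0 < p) (δ : ℝ) (hδ : 0 < δ) :
    ∃ C' > (0:ℝ), ∃ C'' > (0:ℝ), ∀ n : ℕ, 2 ≤ n →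
      (1 / Jint p ((n:ℝ) - 1)) *
          (∫ t in Ioi ((1 + δ) * ((n:ℝ) - 1) ^ (1/p)), t ^ ((n:ℝ) + p - 2) * Real.exp (-(t ^ p) / p))
        ≤ C' * Real.exp (-C'' * n) := by
  set c := 1 + δ
  have hc : 1 < c := by linarith
  obtain ⟨r, hr, hrc⟩ := exists_one_lt_rpow_lt_rpow_sub_mul_log hp hc
  set ε := (c ^ p - p * log c - r ^ p) / p
  have hε : 0 < ε := div_pos (by linarith) hp
  have hcp : (c ^ p)⁻¹ < 1 := inv_lt_one_of_one_lt₀ (one_lt_rpow hc hp)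
  have hC' : 0 < 1 / ((r - 1) * (1 - (c ^ p)⁻¹)) :=
    one_div_pos.2 (mul_pos (sub_pos.2 hr) (sub_pos.2 hcp))
  refine ⟨_, hC', ε / 2, half_pos hε, fun n hn => ?_⟩
  have hn : (2:ℝ) ≤ n := by exact_mod_cast hn
  have hbound := one_div_Jint_mul_integral_Ioi_le hp (a := n - 1) (by linarith) hc hr
  rw [show (n:ℝ) - 1 + p - 1 = n + p - 2 by ring,
    show log c - (c ^ p - r ^ p) / p = -ε by simp only [ε]; field_simp; ring] at hbound
  calc _ ≤ _ := hbound
    _ = 1 / ((r - 1) * (1 - (c ^ p)⁻¹)) * exp (((n:ℝ) - 1) * -ε) := by ring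
    _ ≤ _ := mul_le_mul_of_nonneg_left (exp_le_exp.2 (by nlinarith)) hC'.le
end

section
/- Let p > 0, s > 0, and α ∈ [0,1]. Set t_1 = √(α²s² − s² + (s^p + 1)^{2/p}) − αs. Then t_1 > 0, the identity (s² + t_1² + 2 t_1 s α)^{p/2} = s^p + 1 holds, and ∫_0^∞ exp(−(s² + t² + 2 t s α)^{p/2}/p) dt ≥ e^{−(s^p+1)/p} · t_1. -/
/-!
`t₁` is the positive root of `s² + t² + 2tsα = (sᵖ + 1)^(2/p)`, whose left side increases for
`t ≥ 0`. Hence the integrand is at least `exp (-(sᵖ + 1)/p)` on `(0, t₁]`, and, being bounded by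
`exp (-tᵖ/p)`, it is integrable on `(0, ∞)`.
-/

open MeasureTheory Real Set

lemma integrableOn_exp_neg_rpow_div {p : ℝ} (hp : 0 < p) :
    IntegrableOn (fun x : ℝ => exp (-(x ^ p) / p)) (Ioi 0) := by
  refine (integrableOn_rpow_mul_exp_neg_mul_rpow (s := 0) (by norm_num) hp
    (inv_pos.2 hp)).congr_fun (fun x _ => ?_) measurableSet_Ioi
  dsimp only
  rw [rpow_zero, one_mul, neg_div, neg_mul, inv_mul_eq_div]

lemma sq_lt_rpow_add_one_rpow_two_div {p x : ℝ} (hp : 0 < p) (hx : 0 ≤ x) :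
    x ^ 2 < (x ^ p + 1) ^ (2 / p) :=
  calc x ^ 2 = (x ^ p) ^ (2 / p) := by rw [← rpow_mul hx, mul_div_cancel₀ _ hp.ne', rpow_two]
    _ < (x ^ p + 1) ^ (2 / p) := by gcongr; exact lt_add_one _

lemma sqrt_sq_add_sub_pos {b c : ℝ} (hc : 0 < c) : 0 < √(b ^ 2 + c) - b := by
  refine sub_pos.2 ((le_abs_self b).trans_lt ?_)
  rw [← sqrt_sq_eq_abs]
  exact sqrt_lt_sqrt (sq_nonneg b) (lt_add_of_pos_right _ hc)

lemma sqrt_sq_add_sub_sq_add_two_mul {b c : ℝ} (h : 0 ≤ b ^ 2 + c) :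
    (√(b ^ 2 + c) - b) ^ 2 + 2 * (√(b ^ 2 + c) - b) * b = c := by
  linear_combination sq_sqrt h

lemma mul_sub_le_setIntegral_Ioi {f : ℝ → ℝ} {a b c : ℝ} (hab : a ≤ b)
    (hf : IntegrableOn f (Ioi a)) (hf₀ : ∀ x ∈ Ioi a, 0 ≤ f x) (hc : ∀ x ∈ Ioc a b, c ≤ f x) :
    c * (b - a) ≤ ∫ x in Ioi a, f x :=
  calc c * (b - a) = c * volume.real (Ioc a b) := by simp [hab]
    _ ≤ ∫ x in Ioc a b, f x :=
      setIntegral_ge_of_const_le_real measurableSet_Ioc (by simp) hc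
        (hf.mono_set Ioc_subset_Ioi_self)
    _ ≤ ∫ x in Ioi a, f x :=
      setIntegral_mono_set hf ((ae_restrict_iff' measurableSet_Ioi).2 (ae_of_all _ hf₀))
        Ioc_subset_Ioi_self.eventuallyLE

section Quadratic

variable {p s α : ℝ}

lemma quadratic_le_quadratic_of_le (hs : 0 ≤ s) (hα : 0 ≤ α) {t t' : ℝ} (ht : 0 ≤ t)
    (htt' : t ≤ t') :
    s ^ 2 + t ^ 2 + 2 * t * s * α ≤ s ^ 2 + t' ^ 2 + 2 * t' * s * α := by
  nlinarith [mul_nonneg hs hα]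

lemma integrableOn_exp_neg_quadratic_rpow_div (hp : 0 < p) (hs : 0 ≤ s) (hα : 0 ≤ α) :
    IntegrableOn (fun t => exp (-((s ^ 2 + t ^ 2 + 2 * t * s * α) ^ (p / 2)) / p)) (Ioi 0) := by
  refine (integrableOn_exp_neg_rpow_div hp).mono'
    (by fun_prop : Measurable _).aestronglyMeasurable ?_
  filter_upwards [ae_restrict_mem measurableSet_Ioi] with t (ht : 0 < t)
  have ht_sq : t ^ 2 ≤ s ^ 2 + t ^ 2 + 2 * t * s * α := by
    nlinarith [mul_nonneg (mul_nonneg ht.le hs) hα]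
  rw [norm_of_nonneg (exp_pos _).le, show t ^ p = (t ^ 2) ^ (p / 2) by
    rw [← rpow_natCast_mul ht.le]; ring_nf]
  gcongr

end Quadratic

theorem second_coordinate_system_estimate (p s α : ℝ) (hp : 0 < p) (hs : 0 < s)
    (hα : α ∈ Icc (0:ℝ) 1) :
    0 < Real.sqrt (α^2 * s^2 - s^2 + (s^p + 1) ^ (2/p)) - α * s ∧
    (s^2 + (Real.sqrt (α^2 * s^2 - s^2 + (s^p + 1) ^ (2/p)) - α * s)^2 +
        2 * (Real.sqrt (α^2 * s^2 - s^2 + (s^p + 1) ^ (2/p)) - α * s) * s * α) ^ (p/2)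
      = s^p + 1 ∧
    Real.exp (-(s^p + 1) / p) *
        (Real.sqrt (α^2 * s^2 - s^2 + (s^p + 1) ^ (2/p)) - α * s)
      ≤ ∫ t in Ioi (0:ℝ), Real.exp (-((s^2 + t^2 + 2*t*s*α) ^ (p/2)) / p) := by
  obtain ⟨hα₀, -⟩ := hα
  set R := (s ^ p + 1) ^ (2 / p) with hR
  have hsR : s ^ 2 < R := sq_lt_rpow_add_one_rpow_two_div hp hs.le
  rw [show α ^ 2 * s ^ 2 - s ^ 2 + R = (α * s) ^ 2 + (R - s ^ 2) by ring]
  set t₁ := √((α * s) ^ 2 + (R - s ^ 2)) - α * s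
  have ht₁ : 0 < t₁ := sqrt_sq_add_sub_pos (by linarith)
  have hQ : s ^ 2 + t₁ ^ 2 + 2 * t₁ * s * α = R := by
    linear_combination sqrt_sq_add_sub_sq_add_two_mul (b := α * s) (c := R - s ^ 2)
      (add_nonneg (sq_nonneg _) (by linarith))
  have hQp : (s ^ 2 + t₁ ^ 2 + 2 * t₁ * s * α) ^ (p / 2) = s ^ p + 1 := by
    rw [hQ, hR, ← inv_div 2 p, rpow_rpow_inv (by positivity) (by positivity)]
  refine ⟨ht₁, hQp, ?_⟩
  have h_lower := mul_sub_le_setIntegral_Ioi (c := exp (-(s ^ p + 1) / p)) ht₁.le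
    (integrableOn_exp_neg_quadratic_rpow_div hp hs.le hα₀) (fun t _ => (exp_pos _).le)
    fun t ht => by
      rw [← hQp]
      gcongr exp (-(?_ ^ _) / _)
      · nlinarith [mul_nonneg (mul_nonneg ht.1.le hs.le) hα₀]
      · exact quadratic_le_quadratic_of_le hs.le hα₀ ht.1.le ht.2
  rwa [sub_zero] at h_lower
end
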